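/- arXiv:1210.1919 — 2 statements merged into one kernel-verified Lean document; each statement's English description precedes it below -/
import Mathlib

section
/- (Abel's integral equation.) Let g ∈ C¹[0,1] with g(0) = 0. Then the equation ∫₀ˣ φ(t)·(x−t)^{−1/2} dt = g(x) for x ∈ [0,1] has the unique continuous solution φ(x) = (1/π)·d/dx ∫₀ˣ g(t)·(x−t)^{−1/2} dt = (1/π) ∫₀ˣ g′(t)·(x−t)^{−1/2} dt. -/
/-!
Write `A f x = ∫₀ˣ f(t) (x - t)^(-1/2) dt`. Exchanging the order of integration in `A (A f) x`
leaves the Beta integral `∫ₜˣ (x - s)^(-1/2) (s - t)^(-1/2) ds = π` (an arcsine primitive) as the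
inner integral, so `A (A f) x = π ∫₀ˣ f`. Hence `φ = A g' / π` solves `A φ = ∫₀ˣ g' = g`, and two
continuous solutions have the same primitive, so they coincide.
-/

open MeasureTheory Real intervalIntegral Set

lemma integral_eq_sub_of_hasDerivWithinAt_Icc {f f' : ℝ → ℝ} {a b x : ℝ}
    (hf : ∀ y ∈ Icc a b, HasDerivWithinAt f (f' y) (Icc a b) y) (hf' : ContinuousOn f' (Icc a b))
    (hx : x ∈ Icc a b) : ∫ y in a..x, f' y = f x - f a := by
  have hsub : Icc a x ⊆ Icc a b := Icc_subset_Icc_right hx.2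
  exact integral_eq_sub_of_hasDerivAt_of_le hx.1
    (fun y hy => (hf y (hsub hy)).continuousWithinAt.mono hsub)
    (fun y hy => (hf y (hsub (Ioo_subset_Icc_self hy))).hasDerivAt
      (Icc_mem_nhds hy.1 (hy.2.trans_le hx.2)))
    ((hf'.mono hsub).intervalIntegrable_of_Icc hx.1)

lemma eqOn_zero_of_forall_integral_eq_zero {f : ℝ → ℝ} {a b : ℝ} (hab : a < b)
    (hf : ContinuousOn f (Icc a b)) (h : ∀ x ∈ Icc a b, ∫ t in a..x, f t = 0) :
    EqOn f 0 (Icc a b) := by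
  intro x hx
  have : Fact (x ∈ Icc a b) := ⟨hx⟩
  have hprim : HasDerivWithinAt (fun y => ∫ t in a..y, f t) (f x) (Icc a b) x :=
    integral_hasDerivWithinAt_right
      ((hf.mono (Icc_subset_Icc_right hx.2)).intervalIntegrable_of_Icc hx.1)
      (hf.stronglyMeasurableAtFilter_nhdsWithin measurableSet_Icc x) (hf x hx)
  exact (uniqueDiffOn_Icc hab x hx).eq_deriv _ hprim
    ((hasDerivWithinAt_const x _ 0).congr h (h x hx))

/- `Real.rpow` at a negative base is `exp (log |y| * r) * cos (r * π)`, which vanishes for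
`r = -1/2`: the kernel `(x - t) ^ (-1/2)` is automatically supported on `t < x`. -/
lemma rpow_neg_half_of_nonpos {y : ℝ} (hy : y ≤ 0) : y ^ (-(1/2 : ℝ)) = 0 := by
  rcases hy.lt_or_eq with hy | rfl
  · rw [rpow_def_of_neg hy, show -(1/2 : ℝ) * π = -(π / 2) by ring, cos_neg, cos_pi_div_two,
      mul_zero]
  · exact zero_rpow (by norm_num)

lemma rpow_neg_half_eq_inv_sqrt (y : ℝ) : y ^ (-(1/2 : ℝ)) = (√y)⁻¹ := by
  rcases le_or_gt y 0 with hy | hy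
  · rw [rpow_neg_half_of_nonpos hy, sqrt_eq_zero'.2 hy, inv_zero]
  · rw [rpow_neg hy.le, sqrt_eq_rpow]

lemma rpow_neg_half_nonneg (y : ℝ) : 0 ≤ y ^ (-(1/2 : ℝ)) := by
  rw [rpow_neg_half_eq_inv_sqrt]
  positivity

lemma intervalIntegrable_one_sub_rpow_neg_half :
    IntervalIntegrable (fun v : ℝ => (1 - v) ^ (-(1/2 : ℝ))) volume 0 1 := by
  simpa using (intervalIntegrable_rpow' (r := -(1/2 : ℝ)) (a := 1) (b := 0)
    (by norm_num)).comp_sub_left 1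

lemma hasDerivAt_arcsin_beta {t x s : ℝ} (hs : s ∈ Ioo t x) :
    HasDerivAt (fun s => arcsin ((2 * s - x - t) / (x - t)))
      ((x - s) ^ (-(1/2 : ℝ)) * (s - t) ^ (-(1/2 : ℝ))) s := by
  obtain ⟨hts, hsx⟩ := hs
  have hxt : 0 < x - t := by linarith
  set y := (2 * s - x - t) / (x - t)
  have hy : 1 - y ^ 2 = (2 / (x - t)) ^ 2 * ((x - s) * (s - t)) := by
    simp only [y]
    field_simp
    ring
  have hy1 : y < 1 := by rw [div_lt_one hxt]; linarith
  have hy2 : -1 < y := by rw [lt_div_iff₀ hxt]; linarith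
  have hlin : HasDerivAt (fun s => (2 * s - x - t) / (x - t)) (2 / (x - t)) s := by
    simpa using (((hasDerivAt_id s).const_mul 2).sub_const x).sub_const t |>.div_const (x - t)
  refine ((hasDerivAt_arcsin hy2.ne' hy1.ne).comp s hlin).congr_deriv ?_
  rw [hy, sqrt_mul (by positivity), sqrt_sq (by positivity), rpow_neg_half_eq_inv_sqrt,
    rpow_neg_half_eq_inv_sqrt, sqrt_mul (by linarith)]
  field_simp

lemma integrableOn_beta_and_integral_eq_pi {t x : ℝ} (h : t < x) :
    IntegrableOn (fun s => (x - s) ^ (-(1/2 : ℝ)) * (s - t) ^ (-(1/2 : ℝ))) (Ioc t x) ∧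
    ∫ s in t..x, (x - s) ^ (-(1/2 : ℝ)) * (s - t) ^ (-(1/2 : ℝ)) = π := by
  have hcont : ContinuousOn (fun s => arcsin ((2 * s - x - t) / (x - t))) (Icc t x) := by
    fun_prop
  have hint := integrableOn_deriv_of_nonneg hcont (fun s hs => hasDerivAt_arcsin_beta hs)
    (fun s _ => mul_nonneg (rpow_neg_half_nonneg _) (rpow_neg_half_nonneg _))
  refine ⟨hint, ?_⟩
  rw [integral_eq_sub_of_hasDerivAt_of_le h.le hcont (fun s hs => hasDerivAt_arcsin_beta hs)
    ((intervalIntegrable_iff_integrableOn_Ioc_of_le h.le).2 hint)]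
  have hxt : x - t ≠ 0 := by linarith
  rw [show (2 * x - x - t) / (x - t) = 1 by field_simp; ring,
    show (2 * t - x - t) / (x - t) = -1 by field_simp; ring, arcsin_one, arcsin_neg_one]
  ring

lemma integrableOn_Ioc_beta_and_setIntegral_eq_pi {a u x : ℝ} (hau : a ≤ u) (hux : u < x) :
    IntegrableOn (fun t => (x - t) ^ (-(1/2 : ℝ)) * (t - u) ^ (-(1/2 : ℝ))) (Ioc a x) ∧
    ∫ t in Ioc a x, (x - t) ^ (-(1/2 : ℝ)) * (t - u) ^ (-(1/2 : ℝ)) = π := by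
  obtain ⟨hint, hpi⟩ := integrableOn_beta_and_integral_eq_pi hux
  have hzero : ∀ t ∈ Ioc a x \ Ioc u x, (x - t) ^ (-(1/2 : ℝ)) * (t - u) ^ (-(1/2 : ℝ)) = 0 := by
    rintro t ⟨⟨-, htx⟩, ht⟩
    have htu : t - u ≤ 0 := sub_nonpos.2 (not_lt.1 fun hut => ht ⟨hut, htx⟩)
    rw [rpow_neg_half_of_nonpos htu, mul_zero]
  refine ⟨hint.of_forall_sdiff_eq_zero measurableSet_Ioc hzero, ?_⟩
  rw [setIntegral_eq_of_subset_of_forall_sdiff_eq_zero measurableSet_Ioc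
    (Ioc_subset_Ioc_left hau) hzero, ← integral_of_le hux.le, hpi]

noncomputable def abelTransform (f : ℝ → ℝ) (x : ℝ) : ℝ :=
  ∫ t in (0:ℝ)..x, f t * (x - t) ^ (-(1/2 : ℝ))

lemma abelTransform_const_mul (c : ℝ) (f : ℝ → ℝ) (x : ℝ) :
    abelTransform (fun t => c * f t) x = c * abelTransform f x := by
  simp only [abelTransform, mul_assoc, intervalIntegral.integral_const_mul]

lemma abelTransform_eq_setIntegral {f : ℝ → ℝ} {x c : ℝ} (hx : 0 ≤ x) (hxc : x ≤ c) :
    abelTransform f x = ∫ t in Ioc 0 c, f t * (x - t) ^ (-(1/2 : ℝ)) := by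
  rw [abelTransform, integral_of_le hx, setIntegral_eq_of_subset_of_forall_sdiff_eq_zero
    measurableSet_Ioc (Ioc_subset_Ioc_right hxc)]
  rintro t ⟨⟨ht0, -⟩, ht⟩
  have hxt : x - t ≤ 0 := sub_nonpos.2 (not_lt.1 fun htx => ht ⟨ht0, htx.le⟩)
  rw [rpow_neg_half_of_nonpos hxt, mul_zero]

lemma abelTransform_eq_sqrt_mul (h : ℝ → ℝ) {x : ℝ} (hx : 0 ≤ x) :
    abelTransform h x = √x * ∫ v in (0:ℝ)..1, h (x * v) * (1 - v) ^ (-(1/2 : ℝ)) := by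
  have hscale := smul_integral_comp_mul_left (fun t => h t * (x - t) ^ (-(1/2 : ℝ))) x
    (a := 0) (b := 1)
  rw [mul_zero, mul_one, smul_eq_mul] at hscale
  rw [abelTransform, ← hscale, ← intervalIntegral.integral_const_mul,
    ← intervalIntegral.integral_const_mul]
  refine integral_congr fun v hv => ?_
  have hv1 : 0 ≤ 1 - v := by
    rw [uIcc_of_le zero_le_one] at hv
    linarith [hv.2]
  rw [← mul_one_sub, rpow_neg_half_eq_inv_sqrt, rpow_neg_half_eq_inv_sqrt, sqrt_mul hx, mul_inv]
  calc x * (h (x * v) * ((√x)⁻¹ * (√(1 - v))⁻¹))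
      = x / √x * (h (x * v) * (√(1 - v))⁻¹) := by ring
    _ = √x * (h (x * v) * (√(1 - v))⁻¹) := by rw [div_sqrt]

theorem continuousOn_abelTransform {h : ℝ → ℝ} {b : ℝ} (hh : ContinuousOn h (Icc 0 b)) :
    ContinuousOn (abelTransform h) (Icc 0 b) := by
  have hmaps : ∀ x ∈ Icc 0 b, ∀ v ∈ uIoc (0:ℝ) 1, x * v ∈ Icc 0 b := by
    intro x hx v hv
    rw [uIoc_of_le zero_le_one] at hv
    exact ⟨mul_nonneg hx.1 hv.1.le, (mul_le_of_le_one_right hx.1 hv.2).trans hx.2⟩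
  obtain ⟨M, hM⟩ := isCompact_Icc.exists_bound_of_continuousOn hh
  -- After `t = x * v` the singularity sits at the fixed point `v = 1`, so dominated
  -- convergence applies.
  have hI : ContinuousOn (fun x => ∫ v in (0:ℝ)..1, h (x * v) * (1 - v) ^ (-(1/2 : ℝ)))
      (Icc 0 b) := by
    intro x₀ hx₀
    refine continuousWithinAt_of_dominated_interval
      (bound := fun v => M * (1 - v) ^ (-(1/2 : ℝ))) ?_ ?_
      (intervalIntegrable_one_sub_rpow_neg_half.const_mul M) ?_
    · filter_upwards [self_mem_nhdsWithin] with x hx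
      exact ((hh.comp (continuousOn_const.mul continuousOn_id) (hmaps x hx)).aestronglyMeasurable
        measurableSet_uIoc).mul (by fun_prop : Measurable fun v : ℝ =>
          (1 - v) ^ (-(1/2 : ℝ))).aestronglyMeasurable
    · filter_upwards [self_mem_nhdsWithin] with x hx
      refine Filter.Eventually.of_forall fun v hv => ?_
      rw [norm_mul, norm_of_nonneg (rpow_neg_half_nonneg _)]
      exact mul_le_mul_of_nonneg_right (hM _ (hmaps x hx v hv)) (rpow_neg_half_nonneg _)
    · refine Filter.Eventually.of_forall fun v hv => ?_
      exact ((hh.comp (continuousOn_id.mul continuousOn_const) fun x hx => hmaps x hx v hv)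
        x₀ hx₀).mul continuousWithinAt_const
  exact (continuous_sqrt.continuousOn.mul hI).congr fun x hx => abelTransform_eq_sqrt_mul h hx.1

theorem abelTransform_abelTransform {h : ℝ → ℝ} {x : ℝ} (hx : 0 ≤ x)
    (hh : ContinuousOn h (Icc 0 x)) :
    abelTransform (abelTransform h) x = π * ∫ u in (0:ℝ)..x, h u := by
  set μ := volume.restrict (Ioc (0:ℝ) x)
  set F : ℝ → ℝ → ℝ := fun t u => h u * ((x - t) ^ (-(1/2 : ℝ)) * (t - u) ^ (-(1/2 : ℝ)))
  have hbeta : ∀ᵐ u ∂μ,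
      Integrable (fun t => (x - t) ^ (-(1/2 : ℝ)) * (t - u) ^ (-(1/2 : ℝ))) μ ∧
      ∫ t, (x - t) ^ (-(1/2 : ℝ)) * (t - u) ^ (-(1/2 : ℝ)) ∂μ = π := by
    have hIoo : ∀ᵐ u ∂μ, u ∈ Ioo 0 x := by
      rw [show μ = volume.restrict (Ioo 0 x) from Measure.restrict_congr_set Ioo_ae_eq_Ioc.symm]
      exact ae_restrict_mem measurableSet_Ioo
    filter_upwards [hIoo] with u hu
    exact integrableOn_Ioc_beta_and_setIntegral_eq_pi hu.1.le hu.2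
  have hhμ : Integrable h μ := hh.integrableOn_Icc.mono_set Ioc_subset_Icc_self
  have hint : Integrable (Function.uncurry F) (μ.prod μ) := by
    have hmeas : AEStronglyMeasurable (Function.uncurry F) (μ.prod μ) :=
      hhμ.aestronglyMeasurable.comp_snd.mul (by fun_prop : Measurable fun p : ℝ × ℝ =>
        (x - p.1) ^ (-(1/2 : ℝ)) * (p.1 - p.2) ^ (-(1/2 : ℝ))).aestronglyMeasurable
    refine (integrable_prod_iff' hmeas).2 ⟨?_, (hhμ.norm.mul_const π).congr ?_⟩
    · filter_upwards [hbeta] with u hu using hu.1.const_mul (h u)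
    · filter_upwards [hbeta] with u hu
      simp only [Function.uncurry_apply_pair, F, norm_mul, norm_of_nonneg (rpow_neg_half_nonneg _),
        MeasureTheory.integral_const_mul, hu.2]
  calc abelTransform (abelTransform h) x = ∫ t, ∫ u, F t u ∂μ ∂μ := by
        rw [abelTransform_eq_setIntegral hx le_rfl]
        refine setIntegral_congr_fun measurableSet_Ioc fun t ht => ?_
        rw [abelTransform_eq_setIntegral ht.1.le ht.2, ← MeasureTheory.integral_mul_const]
        congr 1 with u
        ring
    _ = ∫ u, ∫ t, F t u ∂μ ∂μ := integral_integral_swap hint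
    _ = ∫ u, h u * π ∂μ := integral_congr_ae <| by
        filter_upwards [hbeta] with u hu
        simp only [F, MeasureTheory.integral_const_mul, hu.2]
    _ = π * ∫ u in (0:ℝ)..x, h u := by
        rw [MeasureTheory.integral_mul_const, integral_of_le hx, mul_comm]

theorem eqOn_of_abelTransform_eqOn {f₁ f₂ : ℝ → ℝ} {b : ℝ} (hb : 0 < b)
    (hf₁ : ContinuousOn f₁ (Icc 0 b)) (hf₂ : ContinuousOn f₂ (Icc 0 b))
    (h : EqOn (abelTransform f₁) (abelTransform f₂) (Icc 0 b)) : EqOn f₁ f₂ (Icc 0 b) := by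
  have hprim : ∀ x ∈ Icc 0 b, ∫ t in (0:ℝ)..x, (f₁ t - f₂ t) = 0 := by
    intro x hx
    have hsub : Icc 0 x ⊆ Icc 0 b := Icc_subset_Icc_right hx.2
    have hA : abelTransform (abelTransform f₁) x = abelTransform (abelTransform f₂) x :=
      integral_congr fun t ht => by
        rw [uIcc_of_le hx.1] at ht
        rw [h (hsub ht)]
    rw [abelTransform_abelTransform hx.1 (hf₁.mono hsub),
      abelTransform_abelTransform hx.1 (hf₂.mono hsub)] at hA
    rw [integral_sub ((hf₁.mono hsub).intervalIntegrable_of_Icc hx.1)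
      ((hf₂.mono hsub).intervalIntegrable_of_Icc hx.1), mul_left_cancel₀ pi_ne_zero hA, sub_self]
  intro x hx
  exact sub_eq_zero.1 (eqOn_zero_of_forall_integral_eq_zero hb (hf₁.sub hf₂) hprim hx)

/-- Abel's integral equation: for `g ∈ C¹[0,1]` with `g(0) = 0`, the equation
`∫₀ˣ φ(t)(x−t)^{−1/2} dt = g(x)` has a unique continuous solution on `[0,1]`,
given by `φ(x) = (1/π)∫₀ˣ g′(t)(x−t)^{−1/2} dt`. -/
theorem abel_integral_equation
    (g g' : ℝ → ℝ)
    (hg : ∀ x ∈ Set.Icc (0:ℝ) 1, HasDerivWithinAt g (g' x) (Set.Icc 0 1) x)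
    (hg' : ContinuousOn g' (Set.Icc 0 1))
    (hg0 : g 0 = 0) :
    ∃ φ : ℝ → ℝ, ContinuousOn φ (Set.Icc 0 1) ∧
      (∀ x ∈ Set.Icc (0:ℝ) 1, ∫ t in (0:ℝ)..x, φ t * (x - t) ^ (-(1/2 : ℝ)) = g x) ∧
      (∀ x ∈ Set.Icc (0:ℝ) 1,
        φ x = (1 / π) * ∫ t in (0:ℝ)..x, g' t * (x - t) ^ (-(1/2 : ℝ))) ∧
      ∀ ψ : ℝ → ℝ, ContinuousOn ψ (Set.Icc 0 1) →
        (∀ x ∈ Set.Icc (0:ℝ) 1, ∫ t in (0:ℝ)..x, ψ t * (x - t) ^ (-(1/2 : ℝ)) = g x) →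
        ∀ x ∈ Set.Icc (0:ℝ) 1, ψ x = φ x := by
  set φ : ℝ → ℝ := fun x => (1 / π) * abelTransform g' x
  have hφ : ContinuousOn φ (Icc 0 1) := continuousOn_const.mul (continuousOn_abelTransform hg')
  have hsol : ∀ x ∈ Icc (0:ℝ) 1, abelTransform φ x = g x := by
    intro x hx
    rw [abelTransform_const_mul, abelTransform_abelTransform hx.1
      (hg'.mono (Icc_subset_Icc_right hx.2)), integral_eq_sub_of_hasDerivWithinAt_Icc hg hg' hx,
      hg0, sub_zero, ← mul_assoc, one_div_mul_cancel pi_ne_zero, one_mul]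
  refine ⟨φ, hφ, hsol, fun x _ => rfl, fun ψ hψ hψsol => ?_⟩
  exact eqOn_of_abelTransform_eqOn one_pos hψ hφ fun x hx => (hψsol x hx).trans (hsol x hx).symm
end

section
/- Suppose u ∈ C¹([0,1]²) solves the wave equation u_{ξη} = f₁ in characteristic coordinates with d'Alembert representation u(ξ,η) = (1/2)[τ(ξ) + τ(η) − ∫_ξ^η ν₁(t) dt] − ∫_ξ^η dξ₁ ∫_{ξ₁}^η f₁(ξ₁,η₁) dη₁, where ξ = x+y, η = x−y, τ(x) = u(x,0), ν₁(x) = u_y(x,0). If the directional condition (u_x − u_y) = 0 holds along the curve ξ = λ(η) (with λ smooth, 0 ≤ λ(η) ≤ η), then ν₁(η) = τ′(η) − 2∫_{λ(η)}^η f₁(ξ₁, η) dξ₁ for 0 ≤ η ≤ 1. -/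
/-!
Since `u_x − u_y = 2 ∂u/∂η` in characteristic coordinates, the condition says that
`η ↦ u(λ(η₀), η)` is stationary at `η₀`. Differentiating the d'Alembert representation in `η` gives
`½(τ' − ν₁) − ∫_ξ^η f₁(ξ₁, η) dξ₁`: the only non-routine term is the integral over the triangle
`ξ ≤ ξ₁ ≤ η₁ ≤ η`, which after exchanging the order of integration is a primitive in `η` of
`η ↦ ∫_ξ^η f₁(ξ₁, η) dξ₁`.
-/

open MeasureTheory Set intervalIntegral

section Triangle

variable {E : Type*} [NormedAddCommGroup E] [NormedSpace ℝ E]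

theorem integral_triangle_swap_of_le {f : ℝ → ℝ → E} {a b : ℝ} (hab : a ≤ b)
    (hf : IntegrableOn (Function.uncurry f) (Ioc a b ×ˢ Ioc a b)) :
    ∫ x in a..b, ∫ y in x..b, f x y = ∫ y in a..b, ∫ x in a..y, f x y := by
  set g : ℝ → ℝ → E := fun x y => {p : ℝ × ℝ | p.1 < p.2}.indicator (Function.uncurry f) (x, y)
  have hg : Integrable (Function.uncurry g)
      ((volume.restrict (Ioc a b)).prod (volume.restrict (Ioc a b))) := by
    rw [Measure.prod_restrict, ← Measure.volume_eq_prod]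
    exact hf.indicator (measurableSet_lt measurable_fst measurable_snd)
  have inner_y : ∀ x ∈ Ioc a b, ∫ y in Ioc a b, g x y = ∫ y in x..b, f x y := by
    intro x hx
    have hsec : g x = (Ioi x).indicator (f x) := by ext y; simp [g, indicator]
    rw [hsec, setIntegral_indicator measurableSet_Ioi, Ioc_inter_Ioi, max_eq_right hx.1.le,
      integral_of_le hx.2]
  have inner_x : ∀ y ∈ Ioc a b, ∫ x in Ioc a b, g x y = ∫ x in a..y, f x y := by
    intro y hy
    have hsec : (fun x => g x y) = (Iio y).indicator (fun x => f x y) := by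
      ext x; simp [g, indicator]
    have hset : Ioc a b ∩ Iio y = Ioo a y := by
      ext x; simp only [mem_inter_iff, mem_Ioc, mem_Iio, mem_Ioo]; grind
    rw [hsec, setIntegral_indicator measurableSet_Iio, hset, ← integral_Ioc_eq_integral_Ioo,
      integral_of_le hy.1.le]
  calc ∫ x in a..b, ∫ y in x..b, f x y
      = ∫ x in Ioc a b, ∫ y in Ioc a b, g x y := by
        rw [integral_of_le hab]; exact (setIntegral_congr_fun measurableSet_Ioc inner_y).symm
    _ = ∫ y in Ioc a b, ∫ x in Ioc a b, g x y := integral_integral_swap hg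
    _ = ∫ y in a..b, ∫ x in a..y, f x y := by
        rw [integral_of_le hab]; exact setIntegral_congr_fun measurableSet_Ioc inner_x

theorem integral_triangle_swap {f : ℝ → ℝ → E} (hf : Continuous (Function.uncurry f)) (a b : ℝ) :
    ∫ x in a..b, ∫ y in x..b, f x y = ∫ y in a..b, ∫ x in a..y, f x y := by
  have hint : ∀ {c d : ℝ} {g : ℝ → ℝ → E}, Continuous (Function.uncurry g) →
      IntegrableOn (Function.uncurry g) (Ioc c d ×ˢ Ioc c d) := fun hg =>
    (hg.continuousOn.integrableOn_compact (isCompact_Icc.prod isCompact_Icc)).mono_set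
      (prod_mono Ioc_subset_Icc_self Ioc_subset_Icc_self)
  rcases le_total a b with hab | hba
  · exact integral_triangle_swap_of_le hab (hint hf)
  · have hf' : Continuous (Function.uncurry fun x y => f y x) := hf.comp continuous_swap
    calc ∫ x in a..b, ∫ y in x..b, f x y
        = ∫ x in b..a, ∫ y in b..x, f x y := by
          rw [integral_symm b a, ← intervalIntegral.integral_neg]
          congr 1; ext x; rw [integral_symm b x, neg_neg]
      _ = ∫ y in b..a, ∫ x in y..a, f x y :=
          (integral_triangle_swap_of_le hba (hint hf')).symm
      _ = ∫ y in a..b, ∫ x in a..y, f x y := by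
          rw [integral_symm b a, ← intervalIntegral.integral_neg]
          congr 1; ext y; rw [integral_symm y a, neg_neg]

variable [CompleteSpace E]

theorem hasDerivAt_integral_triangle {f : ℝ → ℝ → E} (hf : Continuous (Function.uncurry f))
    (a s : ℝ) :
    HasDerivAt (fun t => ∫ x in a..t, ∫ y in x..t, f x y) (∫ x in a..s, f x s) s := by
  have hprim : Continuous fun y => ∫ x in a..y, f x y :=
    (continuous_parametric_primitive_of_continuous (f := fun y x => f x y) (a₀ := a)
      (hf.comp continuous_swap)).comp (continuous_id.prodMk continuous_id)
  simpa only [integral_triangle_swap hf] using (hprim.integral_hasStrictDerivAt a s).hasDerivAt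

end Triangle

theorem darboux_functional_relation_general
    (τ τ' ν₁ : ℝ → ℝ) (f₁ : ℝ → ℝ → ℝ) (lam : ℝ → ℝ)
    (hτ : ∀ x : ℝ, HasDerivAt τ (τ' x) x)
    (hν₁ : Continuous ν₁)
    (hf₁ : Continuous fun p : ℝ × ℝ => f₁ p.1 p.2)
    (u : ℝ → ℝ → ℝ)
    (hu : ∀ ξ η : ℝ, u ξ η =
      (1 / 2) * (τ ξ + τ η - ∫ t in ξ..η, ν₁ t) -
        ∫ ξ₁ in ξ..η, ∫ η₁ in ξ₁..η, f₁ ξ₁ η₁)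
    (hcond : ∀ η ∈ Set.Icc (0:ℝ) 1, HasDerivAt (fun s => u (lam η) s) 0 η) :
    ∀ η ∈ Set.Icc (0:ℝ) 1,
      ν₁ η = τ' η - 2 * ∫ ξ₁ in (lam η)..η, f₁ ξ₁ η := by
  intro η hη
  have hderiv : HasDerivAt (fun s => u (lam η) s)
      ((1 / 2) * (τ' η - ν₁ η) - ∫ ξ₁ in (lam η)..η, f₁ ξ₁ η) η := by
    simp only [hu]
    exact ((((hτ η).const_add _).sub (hν₁.integral_hasStrictDerivAt _ η).hasDerivAt).const_mul
      (1 / 2)).sub (hasDerivAt_integral_triangle hf₁ _ η)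
  have := hderiv.unique (hcond η hη)
  linarith

/-- From the d'Alembert representation
`u(ξ,η) = ½[τ(ξ) + τ(η) − ∫_ξ^η ν₁] − ∫_ξ^η ∫_{ξ₁}^η f₁`, the directional
condition `u_x − u_y = 0` along the curve `ξ = λ(η)` (equivalently `∂u/∂η = 0`
there, since `u_x − u_y = 2∂u/∂η` in characteristic coordinates) yields
`ν₁(η) = τ′(η) − 2∫_{λ(η)}^η f₁(ξ₁,η) dξ₁` for `0 ≤ η ≤ 1`. -/
theorem darboux_functional_relation
    (τ τ' ν₁ : ℝ → ℝ) (f₁ : ℝ → ℝ → ℝ) (lam : ℝ → ℝ)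
    (hτ : ∀ x : ℝ, HasDerivAt τ (τ' x) x)
    (hν₁ : Continuous ν₁)
    (hf₁ : Continuous fun p : ℝ × ℝ => f₁ p.1 p.2)
    (hlam : ∀ η ∈ Set.Icc (0:ℝ) 1, 0 ≤ lam η ∧ lam η ≤ η)
    (u : ℝ → ℝ → ℝ)
    (hu : ∀ ξ η : ℝ, u ξ η =
      (1 / 2) * (τ ξ + τ η - ∫ t in ξ..η, ν₁ t) -
        ∫ ξ₁ in ξ..η, ∫ η₁ in ξ₁..η, f₁ ξ₁ η₁)
    (hcond : ∀ η ∈ Set.Icc (0:ℝ) 1, HasDerivAt (fun s => u (lam η) s) 0 η) :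
    ∀ η ∈ Set.Icc (0:ℝ) 1,
      ν₁ η = τ' η - 2 * ∫ ξ₁ in (lam η)..η, f₁ ξ₁ η :=
  darboux_functional_relation_general τ τ' ν₁ f₁ lam hτ hν₁ hf₁ u hu hcond
end
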